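/- Fix N ∈ ℕ, a signature σ, and a σ-EME Φ. For every rooted model (M,0) whose frame has size at most N: Φ is a σ-cover of M if and only if M,0 ⊨ cover(σ,Φ), where cover(σ,Φ) := ⋀_{φ∈Φ} ⋀_{p∈σ} (◇^{≤N}(φ∧p) → □^{≤N}(φ→p)). -/
import Mathlib


inductive MForm (α : Type) : Type
  | top : MForm α
  | atom : α → MForm α
  | neg : MForm α → MForm α
  | and : MForm α → MForm α → MForm α
  | box : MForm α → MForm α
deriving DecidableEq

namespace MForm

def imp {α : Type} (φ ψ : MForm α) : MForm α := neg (and φ (neg ψ))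

def dia {α : Type} (φ : MForm α) : MForm α := neg (box (neg φ))

def sig {α : Type} [DecidableEq α] : MForm α → Finset α
  | top => ∅
  | atom p => {p}
  | neg φ => sig φ
  | and φ ψ => sig φ ∪ sig ψ
  | box φ => sig φ

def IsProp {α : Type} : MForm α → Prop
  | top => True
  | atom _ => True
  | neg φ => IsProp φ
  | and φ ψ => IsProp φ ∧ IsProp ψ
  | box _ => False

def subf {α : Type} [DecidableEq α] : MForm α → Finset (MForm α)
  | top => {top}
  | atom p => {atom p}
  | neg φ => insert (neg φ) (subf φ)
  | and φ ψ => insert (and φ ψ) (subf φ ∪ subf ψ)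
  | box φ => insert (box φ) (subf φ)

/-- The dag-size of a formula: the number of its distinct subformulas. -/
def dagSize {α : Type} [DecidableEq α] (φ : MForm α) : ℕ := (subf φ).card

end MForm

def psat {α : Type} (v : α → Prop) : MForm α → Prop
  | .top => True
  | .atom p => v p
  | .neg φ => ¬ psat v φ
  | .and φ ψ => psat v φ ∧ psat v ψ
  | .box _ => True

/-- Propositional tautology. -/
def PTaut {α : Type} (φ : MForm α) : Prop := ∀ v : α → Prop, psat v φ

def bigAnd {α : Type} : List (MForm α) → MForm α
  | [] => .top
  | φ :: l => .and φ (bigAnd l)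

def bigOr {α : Type} (l : List (MForm α)) : MForm α := .neg (bigAnd (l.map .neg))

def boxIter {α : Type} : ℕ → MForm α → MForm α
  | 0, φ => φ
  | n + 1, φ => .box (boxIter n φ)

def diaIter {α : Type} : ℕ → MForm α → MForm α
  | 0, φ => φ
  | n + 1, φ => MForm.dia (diaIter n φ)

/-- `□^{≤n} φ`. -/
def ble {α : Type} (n : ℕ) (φ : MForm α) : MForm α :=
  bigAnd ((List.range (n + 1)).map (fun k => boxIter k φ))

/-- `◇^{≤n} φ`. -/
def dle {α : Type} (n : ℕ) (φ : MForm α) : MForm α := .neg (ble n (.neg φ))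

def substAtoms {α β : Type} (s : α → MForm β) : MForm α → MForm β
  | .top => .top
  | .atom a => s a
  | .neg φ => .neg (substAtoms s φ)
  | .and φ ψ => .and (substAtoms s φ) (substAtoms s ψ)
  | .box φ => .box (substAtoms s φ)

structure Frame where
  W : Type
  ne : Nonempty W
  R : W → W → Prop

structure PFrame extends Frame where
  pt : W

def sat (F : Frame) (V : F.W → ℕ → Prop) : F.W → MForm ℕ → Prop
  | w, .top => True
  | w, .atom p => V w p
  | w, .neg φ => ¬ sat F V w φ
  | w, .and φ ψ => sat F V w φ ∧ sat F V w ψ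
  | w, .box φ => ∀ v, F.R w v → sat F V v φ

def validAt (F : Frame) (w : F.W) (φ : MForm ℕ) : Prop := ∀ V, sat F V w φ

def Log (𝓕 : Set PFrame) : Set (MForm ℕ) := {φ | ∀ P ∈ 𝓕, validAt P.toFrame P.pt φ}

def Rooted (F : Frame) (w : F.W) : Prop := ∀ v, Relation.ReflTransGen F.R w v

def StrImp (L : Set (MForm ℕ)) (σ : Finset ℕ) (φ χ : MForm ℕ) : Prop :=
  χ.sig ⊆ σ ∧ φ.imp χ ∈ L ∧
    ∀ ψ : MForm ℕ, ψ.sig ⊆ σ → φ.imp ψ ∈ L → χ.imp ψ ∈ L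

def UnifInt (L : Set (MForm ℕ)) (σ : Finset ℕ) (φ χ : MForm ℕ) : Prop :=
  χ.sig ⊆ σ ∧ φ.imp χ ∈ L ∧
    ∀ ψ : MForm ℕ, ψ.sig ∩ φ.sig ⊆ σ → φ.imp ψ ∈ L → χ.imp ψ ∈ L

def CraigInt (L : Set (MForm ℕ)) (φ ψ χ : MForm ℕ) : Prop :=
  φ.imp χ ∈ L ∧ χ.imp ψ ∈ L ∧ χ.sig ⊆ φ.sig ∩ ψ.sig

def HasCIP (L : Set (MForm ℕ)) : Prop :=
  ∀ φ ψ : MForm ℕ, φ.imp ψ ∈ L → ∃ χ, CraigInt L φ ψ χ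

def IsBisim (σ : Finset ℕ) (F₁ : Frame) (V₁ : F₁.W → ℕ → Prop)
    (F₂ : Frame) (V₂ : F₂.W → ℕ → Prop) (Z : F₁.W → F₂.W → Prop) : Prop :=
  (∀ w₁ w₂, Z w₁ w₂ → ∀ p ∈ σ, (V₁ w₁ p ↔ V₂ w₂ p)) ∧
  (∀ w₁ w₂ v₁, Z w₁ w₂ → F₁.R w₁ v₁ → ∃ v₂, F₂.R w₂ v₂ ∧ Z v₁ v₂) ∧
  (∀ w₁ w₂ v₂, Z w₁ w₂ → F₂.R w₂ v₂ → ∃ v₁, F₁.R w₁ v₁ ∧ Z v₁ v₂)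

def Bisim (σ : Finset ℕ) (F₁ : Frame) (V₁ : F₁.W → ℕ → Prop) (w₁ : F₁.W)
    (F₂ : Frame) (V₂ : F₂.W → ℕ → Prop) (w₂ : F₂.W) : Prop :=
  ∃ Z, IsBisim σ F₁ V₁ F₂ V₂ Z ∧ Z w₁ w₂

def IsEME (σ : Finset ℕ) (Φ : Finset (MForm ℕ)) : Prop :=
  (∀ φ ∈ Φ, φ.IsProp ∧ φ.sig ⊆ σ) ∧
  (∀ v : ℕ → Prop, ∃ φ ∈ Φ, psat v φ) ∧
  (∀ φ ∈ Φ, ∀ ψ ∈ Φ, φ ≠ ψ → ∀ v : ℕ → Prop, ¬ (psat v φ ∧ psat v ψ))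

def IsCover (σ : Finset ℕ) (Φ : Finset (MForm ℕ)) (F : Frame) (V : F.W → ℕ → Prop) : Prop :=
  ∀ φ ∈ Φ, ∀ w₁ w₂, sat F V w₁ φ → sat F V w₂ φ →
    ∀ χ : MForm ℕ, χ.IsProp → χ.sig ⊆ σ → (sat F V w₁ χ ↔ sat F V w₂ χ)

noncomputable def coverFml (σ : Finset ℕ) (Φ : Finset (MForm ℕ)) (N : ℕ) : MForm ℕ :=
  bigAnd (Φ.toList.map (fun φ => bigAnd (σ.toList.map (fun p =>
    MForm.imp (dle N (.and φ (.atom p))) (ble N (MForm.imp φ (.atom p)))))))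

/-- Exactly-`k`-step reachability. -/
def stepN (F : Frame) : ℕ → F.W → F.W → Prop
  | 0, w, v => v = w
  | k+1, w, v => ∃ u, F.R w u ∧ stepN F k u v

lemma stepN_succ' (F : Frame) (k : ℕ) :
    ∀ w v, stepN F (k+1) w v ↔ ∃ u, stepN F k w u ∧ F.R u v := by
  induction k with
  | zero => intro w v; simp [stepN]
  | succ k ih =>
      intro w v
      constructor
      · rintro ⟨u, hwu, h⟩
        rcases (ih u v).1 h with ⟨t, ht, htv⟩
        exact ⟨t, ⟨u, hwu, ht⟩, htv⟩
      · rintro ⟨t, ⟨u, hwu, ht⟩, htv⟩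
        exact ⟨u, hwu, (ih u v).2 ⟨t, ht, htv⟩⟩

lemma sat_bigAnd (F : Frame) (V : F.W → ℕ → Prop) (w : F.W) (l : List (MForm ℕ)) :
    sat F V w (bigAnd l) ↔ ∀ φ ∈ l, sat F V w φ := by
  induction l with
  | nil => simp [bigAnd, sat]
  | cons φ l ih => simp [bigAnd, sat, ih]

lemma sat_boxIter (F : Frame) (V : F.W → ℕ → Prop) (φ : MForm ℕ) (k : ℕ) :
    ∀ w, sat F V w (boxIter k φ) ↔ ∀ v, stepN F k w v → sat F V v φ := by
  induction k with
  | zero => intro w; simp [boxIter, stepN]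
  | succ k ih =>
      intro w
      show (∀ u, F.R w u → sat F V u (boxIter k φ)) ↔ _
      constructor
      · rintro h v ⟨u, hwu, hk⟩
        exact (ih u).1 (h u hwu) v hk
      · intro h u hwu
        exact (ih u).2 fun v hk => h v ⟨u, hwu, hk⟩

lemma sat_ble (F : Frame) (V : F.W → ℕ → Prop) (w : F.W) (n : ℕ) (φ : MForm ℕ) :
    sat F V w (ble n φ) ↔ ∀ k ≤ n, ∀ v, stepN F k w v → sat F V v φ := by
  simp [ble, sat_bigAnd, sat_boxIter, Nat.lt_succ_iff]

lemma sat_dle (F : Frame) (V : F.W → ℕ → Prop) (w : F.W) (n : ℕ) (φ : MForm ℕ) :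
    sat F V w (dle n φ) ↔ ∃ k ≤ n, ∃ v, stepN F k w v ∧ sat F V v φ := by
  show ¬ _ ↔ _
  rw [sat_ble]
  push_neg
  constructor
  · rintro ⟨k, hk, v, hv, hsat⟩
    exact ⟨k, hk, v, hv, not_not.1 hsat⟩
  · rintro ⟨k, hk, v, hv, hsat⟩
    exact ⟨k, hk, v, hv, fun h => h hsat⟩

lemma sat_imp (F : Frame) (V : F.W → ℕ → Prop) (w : F.W) (φ ψ : MForm ℕ) :
    sat F V w (φ.imp ψ) ↔ (sat F V w φ → sat F V w ψ) := by
  simp [MForm.imp, sat]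

lemma sat_psat (F : Frame) (V : F.W → ℕ → Prop) (w : F.W) :
    ∀ χ : MForm ℕ, χ.IsProp → (sat F V w χ ↔ psat (V w) χ) := by
  intro χ h
  induction χ with
  | top => simp [sat, psat]
  | atom p => simp [sat, psat]
  | neg φ ih => exact not_congr (ih h)
  | and φ ψ ih1 ih2 => exact and_congr (ih1 h.1) (ih2 h.2)
  | box φ _ => exact absurd h (by simp [MForm.IsProp])

lemma psat_congr (v₁ v₂ : ℕ → Prop) :
    ∀ χ : MForm ℕ, χ.IsProp → (∀ p ∈ χ.sig, (v₁ p ↔ v₂ p)) →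
      (psat v₁ χ ↔ psat v₂ χ) := by
  intro χ h hag
  induction χ with
  | top => simp [psat]
  | atom p => exact hag p (by simp [MForm.sig])
  | neg φ ih => exact not_congr (ih h hag)
  | and φ ψ ih1 ih2 =>
      exact and_congr (ih1 h.1 fun p hp => hag p (Finset.mem_union_left _ hp))
        (ih2 h.2 fun p hp => hag p (Finset.mem_union_right _ hp))
  | box φ _ => exact absurd h (by simp [MForm.IsProp])

lemma reach_bound (F : Frame) (r : F.W) (N : ℕ) (hfin : Finite F.W)
    (hcard : Nat.card F.W ≤ N) (hroot : Rooted F r) :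
    ∀ w, ∃ k ≤ N, stepN F k r w := by
  classical
  set S : ℕ → Set F.W := fun m => {w | ∃ k ≤ m, stepN F k r w} with hS
  have Sfin : ∀ m, (S m).Finite := fun m => Set.toFinite _
  have mono : ∀ m j, m ≤ j → S m ⊆ S j := by
    rintro m j hmj w ⟨k, hk, h⟩; exact ⟨k, hk.trans hmj, h⟩
  -- there is a saturation point m < N
  have hsat : ∃ m < N, S (m+1) ⊆ S m := by
    by_contra hcon
    push_neg at hcon
    have grow : ∀ m, m ≤ N → m + 1 ≤ (S m).ncard := by
      intro m
      induction m with
      | zero =>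
          intro _
          have hr : r ∈ S 0 := ⟨0, le_refl 0, rfl⟩
          have := (Set.ncard_pos (Sfin 0)).2 ⟨r, hr⟩
          omega
      | succ m ih =>
          intro hm
          have h1 : m + 1 ≤ (S m).ncard := ih (by omega)
          rcases Set.not_subset.1 (hcon m (by omega)) with ⟨x, hx1, hx2⟩
          have hss : S m ⊂ S (m+1) :=
            ⟨mono m (m+1) (by omega), fun h => hx2 (h hx1)⟩
          have := Set.ncard_lt_ncard hss (Sfin (m+1))
          omega
    have h1 := grow N le_rfl
    have h2 : (S N).ncard ≤ Nat.card F.W := by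
      have := Set.ncard_le_ncard (Set.subset_univ (S N)) Set.finite_univ
      rwa [Set.ncard_univ] at this
    omega
  rcases hsat with ⟨m, hmN, hsat⟩
  have stable : ∀ j, S (m + j) ⊆ S m := by
    intro j
    induction j with
    | zero => exact le_refl _
    | succ j ih =>
        rintro w ⟨k, hk, hw⟩
        rcases Nat.lt_or_ge k (m + j + 1) with h | h
        · exact ih ⟨k, by omega, hw⟩
        · have hkeq : k = m + j + 1 := by omega
          subst hkeq
          rcases (stepN_succ' F (m + j) r w).1 hw with ⟨u, hu, huw⟩
          rcases ih ⟨m + j, le_refl _, hu⟩ with ⟨k', hk', hu'⟩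
          exact hsat ⟨k' + 1, by omega, (stepN_succ' F k' r w).2 ⟨u, hu', huw⟩⟩
  intro w
  have hreach : ∃ k, stepN F k r w := by
    have h := hroot w
    induction h with
    | refl => exact ⟨0, rfl⟩
    | tail _ hR ih =>
        rcases ih with ⟨k, hk⟩
        exact ⟨k + 1, (stepN_succ' F k r _).2 ⟨_, hk, hR⟩⟩
  rcases hreach with ⟨k, hk⟩
  rcases Nat.lt_or_ge k N with h | h
  · exact ⟨k, by omega, hk⟩
  · rcases stable (k - m) ⟨k, by omega, hk⟩ with ⟨k', hk', h'⟩
    exact ⟨k', by omega, h'⟩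

/-- for every rooted model of size at most `N`, the σ-EME `Φ` is a σ-cover of
the model iff the formula `cover(σ,Φ)` holds at the root. -/
theorem stmt2 (N : ℕ) (σ : Finset ℕ) (Φ : Finset (MForm ℕ)) (hΦ : IsEME σ Φ)
    (F : Frame) (V : F.W → ℕ → Prop) (r : F.W)
    (hfin : Finite F.W) (hcard : Nat.card F.W ≤ N) (hroot : Rooted F r) :
    IsCover σ Φ F V ↔ sat F V r (coverFml σ Φ N) := by
  have hreach := reach_bound F r N hfin hcard hroot
  have hble : ∀ ψ : MForm ℕ, sat F V r (ble N ψ) ↔ ∀ v, sat F V v ψ := by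
    intro ψ
    rw [sat_ble]
    constructor
    · intro h v
      rcases hreach v with ⟨k, hk, hs⟩
      exact h k hk v hs
    · intro h k _ v _; exact h v
  have hdle : ∀ ψ : MForm ℕ, sat F V r (dle N ψ) ↔ ∃ v, sat F V v ψ := by
    intro ψ
    rw [sat_dle]
    constructor
    · rintro ⟨k, _, v, _, h⟩; exact ⟨v, h⟩
    · rintro ⟨v, h⟩
      rcases hreach v with ⟨k, hk, hs⟩
      exact ⟨k, hk, v, hs, h⟩
  have key : sat F V r (coverFml σ Φ N) ↔
      ∀ φ ∈ Φ, ∀ p ∈ σ, (∃ v, sat F V v φ ∧ V v p) → ∀ v, sat F V v φ → V v p := by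
    rw [coverFml, sat_bigAnd]
    constructor
    · intro h φ hφ p hp
      have h1 := h _ (List.mem_map.2 ⟨φ, Finset.mem_toList.2 hφ, rfl⟩)
      rw [sat_bigAnd] at h1
      have h2 := h1 _ (List.mem_map.2 ⟨p, Finset.mem_toList.2 hp, rfl⟩)
      rw [sat_imp, hdle, hble] at h2
      intro hex v hv
      rcases hex with ⟨v', a, b⟩
      have h3 := h2 ⟨v', a, b⟩ v
      rw [sat_imp] at h3
      exact h3 hv
    · intro h ψ hψ
      rcases List.mem_map.1 hψ with ⟨φ, hφ, rfl⟩
      rw [sat_bigAnd]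
      intro χ hχ
      rcases List.mem_map.1 hχ with ⟨p, hp, rfl⟩
      rw [sat_imp, hdle, hble]
      intro hex v
      rw [sat_imp]
      intro hv
      rcases hex with ⟨v', hv'⟩
      exact h φ (Finset.mem_toList.1 hφ) p (Finset.mem_toList.1 hp)
        ⟨v', hv'.1, hv'.2⟩ v hv
  rw [key]
  constructor
  · intro hcov φ hφ p hp hex v hv
    rcases hex with ⟨v₁, hv₁, hp₁⟩
    have h := hcov φ hφ v₁ v hv₁ hv (.atom p) trivial
      (by simp [MForm.sig]; exact hp)
    exact h.1 hp₁
  · intro h φ hφ w₁ w₂ h1 h2 χ hχ hσ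
    rw [sat_psat _ _ _ _ hχ, sat_psat _ _ _ _ hχ]
    apply psat_congr _ _ _ hχ
    intro p hp
    have hpσ := hσ hp
    constructor
    · intro hv; exact h φ hφ p hpσ ⟨w₁, h1, hv⟩ w₂ h2
    · intro hv; exact h φ hφ p hpσ ⟨w₂, h2, hv⟩ w₁ h1
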